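/- Let X₁ ⊆ X₀ and Y₁ ⊆ Y₀ be normed spaces, 0 < α ≤ 1, β > 0. Suppose T : X₀ → Y₀ is globally α-Hölderian with constant M₀, i.e. ‖Ta − Tb‖_{Y₀} ≤ M₀‖a − b‖_{X₀}^α for all a, b ∈ X₀, and T maps X₁ into Y₁ with ‖Ta‖_{Y₁} ≤ M₁‖a‖_{X₁}^β. Then for all a ∈ X₀ and all t > 0, K(Ta, t^β; Y₀, Y₁) ≤ max(M₀, M₁) ([K(a, t; X₀, X₁)]^β + [K(a, t; X₀, X₁)]^α). -/

import Mathlib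

open Real

/-- The Peetre K-functional for the couple `(X₀, X₁)`, where `X₁` is embedded
in `X₀` via the additive map `j`. -/
noncomputable def Kfunc {X₀ X₁ : Type*} [NormedAddCommGroup X₀] [NormedAddCommGroup X₁]
    (j : X₁ →+ X₀) (a : X₀) (t : ℝ) : ℝ :=
  sInf {r : ℝ | ∃ a₁ : X₁, r = ‖a - j a₁‖ + t * ‖a₁‖}

/-!
For every decomposition `a = (a - a₁) + a₁` with `a₁ ∈ X₁`, the image splits as
`Ta = (Ta - Ta₁) + Ta₁` with `Ta₁ ∈ Y₁`, so the Hölder and growth bounds give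
`K(Ta, t^β) ≤ M₀ ‖a - a₁‖^α + M₁ (t ‖a₁‖)^β ≤ max(M₀, M₁) (s^β + s^α)`, where
`s = ‖a - a₁‖ + t ‖a₁‖`. The right-hand side is monotone and continuous in `s ≥ 0`, so it
passes to the infimum `s → K(a, t)`. When `max(M₀, M₁) < 0` the Hölder bound forces
`a = 0`, and both sides vanish.
-/

section KFunctional

variable {X₀ X₁ : Type*} [NormedAddCommGroup X₀] [NormedAddCommGroup X₁]
  (j : X₁ →+ X₀) (a : X₀) {t : ℝ}

lemma Kfunc_le (ht : 0 ≤ t) (a₁ : X₁) : Kfunc j a t ≤ ‖a - j a₁‖ + t * ‖a₁‖ :=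
  csInf_le ⟨0, by rintro r ⟨b, rfl⟩; positivity⟩ ⟨a₁, rfl⟩

lemma Kfunc_nonneg (ht : 0 ≤ t) : 0 ≤ Kfunc j a t :=
  le_csInf ⟨_, 0, rfl⟩ (by rintro r ⟨b, rfl⟩; positivity)

lemma le_comp_Kfunc (ht : 0 ≤ t) {g : ℝ → ℝ} (hg : ContinuousAt g (Kfunc j a t))
    (hmono : MonotoneOn g (Set.Ici 0)) {L : ℝ}
    (hL : ∀ a₁ : X₁, L ≤ g (‖a - j a₁‖ + t * ‖a₁‖)) :
    L ≤ g (Kfunc j a t) := by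
  have hS : {r : ℝ | ∃ a₁ : X₁, r = ‖a - j a₁‖ + t * ‖a₁‖} ⊆ Set.Ici 0 := by
    rintro r ⟨b, rfl⟩
    exact Set.mem_Ici.2 (by positivity)
  rw [Kfunc, MonotoneOn.map_csInf_of_continuousWithinAt hg.continuousWithinAt (hmono.mono hS)
    ⟨_, 0, rfl⟩ ⟨0, hS⟩]
  refine le_csInf (Set.Nonempty.image _ ⟨_, 0, rfl⟩) ?_
  rintro _ ⟨_, ⟨a₁, rfl⟩, rfl⟩
  exact hL a₁

end KFunctional

lemma eq_of_holder_of_neg {X Y : Type*} [NormedAddCommGroup X] [NormedAddCommGroup Y]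
    {T : X → Y} {α M : ℝ} (hα : α ≠ 0) (hM : M < 0)
    (hT : ∀ a b : X, ‖T a - T b‖ ≤ M * ‖a - b‖ ^ α) (a b : X) : a = b := by
  have hpow : ‖a - b‖ ^ α = 0 := by
    nlinarith [(norm_nonneg _).trans (hT a b), rpow_nonneg (norm_nonneg (a - b)) α]
  rw [rpow_eq_zero (norm_nonneg _) hα, norm_sub_eq_zero_iff] at hpow
  exact hpow

lemma Kfunc_image_le {X₀ X₁ Y₀ Y₁ : Type*}
    [NormedAddCommGroup X₀] [NormedAddCommGroup X₁]
    [NormedAddCommGroup Y₀] [NormedAddCommGroup Y₁]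
    (jX : X₁ →+ X₀) (jY : Y₁ →+ Y₀) {α β M₀ M₁ t : ℝ} (ht : 0 ≤ t)
    {T₀ : X₀ → Y₀} {T₁ : X₁ → Y₁} (hcompat : ∀ a : X₁, jY (T₁ a) = T₀ (jX a))
    (h0 : ∀ a b : X₀, ‖T₀ a - T₀ b‖ ≤ M₀ * ‖a - b‖ ^ α)
    (h1 : ∀ a : X₁, ‖T₁ a‖ ≤ M₁ * ‖a‖ ^ β) (a : X₀) (a₁ : X₁) :
    Kfunc jY (T₀ a) (t ^ β) ≤ M₀ * ‖a - jX a₁‖ ^ α + M₁ * (t * ‖a₁‖) ^ β :=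
  calc Kfunc jY (T₀ a) (t ^ β) ≤ ‖T₀ a - T₀ (jX a₁)‖ + t ^ β * ‖T₁ a₁‖ := by
        simpa only [hcompat] using Kfunc_le jY (T₀ a) (rpow_nonneg ht β) (T₁ a₁)
    _ ≤ M₀ * ‖a - jX a₁‖ ^ α + t ^ β * (M₁ * ‖a₁‖ ^ β) :=
        add_le_add (h0 _ _) (mul_le_mul_of_nonneg_left (h1 a₁) (rpow_nonneg ht β))
    _ = M₀ * ‖a - jX a₁‖ ^ α + M₁ * (t * ‖a₁‖) ^ β := by
        rw [mul_rpow ht (norm_nonneg _)]; ring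

lemma mul_rpow_add_mul_rpow_le {x y α β M₀ M₁ C : ℝ} (hx : 0 ≤ x) (hy : 0 ≤ y)
    (hα : 0 ≤ α) (hβ : 0 ≤ β) (hM₀ : M₀ ≤ C) (hM₁ : M₁ ≤ C) (hC : 0 ≤ C) :
    M₀ * x ^ α + M₁ * y ^ β ≤ C * ((x + y) ^ β + (x + y) ^ α) := by
  have hxα : M₀ * x ^ α ≤ C * (x + y) ^ α :=
    mul_le_mul hM₀ (rpow_le_rpow hx (by linarith) hα) (rpow_nonneg hx α) hC
  have hyβ : M₁ * y ^ β ≤ C * (x + y) ^ β :=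
    mul_le_mul hM₁ (rpow_le_rpow hy (by linarith) hβ) (rpow_nonneg hy β) hC
  linarith

theorem Kfunc_estimate_holder_bounded_general
    {X₀ X₁ Y₀ Y₁ : Type*}
    [NormedAddCommGroup X₀] [NormedAddCommGroup X₁]
    [NormedAddCommGroup Y₀] [NormedAddCommGroup Y₁]
    (jX : X₁ →+ X₀) (jY : Y₁ →+ Y₀)
    (α β : ℝ) (hα0 : 0 < α) (hβ : 0 < β)
    (T₀ : X₀ → Y₀) (T₁ : X₁ → Y₁)
    (hcompat : ∀ a : X₁, jY (T₁ a) = T₀ (jX a))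
    (M₀ M₁ : ℝ)
    (h0 : ∀ a b : X₀, ‖T₀ a - T₀ b‖ ≤ M₀ * ‖a - b‖ ^ α)
    (h1 : ∀ a : X₁, ‖T₁ a‖ ≤ M₁ * ‖a‖ ^ β) :
    ∀ (a : X₀) (t : ℝ), 0 < t →
      Kfunc jY (T₀ a) (t ^ β) ≤
        max M₀ M₁ * ((Kfunc jX a t) ^ β + (Kfunc jX a t) ^ α) := by
  intro a t ht
  have hsplit := Kfunc_image_le jX jY ht.le hcompat h0 h1 a
  rcases le_or_gt 0 (max M₀ M₁) with hC | hC
  · refine le_comp_Kfunc (g := fun s => max M₀ M₁ * (s ^ β + s ^ α)) jX a ht.le ?_ ?_ fun a₁ =>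
      (hsplit a₁).trans (mul_rpow_add_mul_rpow_le (norm_nonneg _) (by positivity) hα0.le hβ.le
        (le_max_left _ _) (le_max_right _ _) hC)
    · exact continuousAt_const.mul ((continuousAt_rpow_const _ _ (Or.inr hβ.le)).add
        (continuousAt_rpow_const _ _ (Or.inr hα0.le)))
    · exact fun x hx y _ hxy => mul_le_mul_of_nonneg_left
        (add_le_add (rpow_le_rpow hx hxy hβ.le) (rpow_le_rpow hx hxy hα0.le)) hC
  · have ha : a = jX 0 := eq_of_holder_of_neg hα0.ne' (max_lt_iff.1 hC).1 h0 a (jX 0)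
    have hK : Kfunc jX a t = 0 := le_antisymm
      (by simpa [ha] using Kfunc_le jX a ht.le 0) (Kfunc_nonneg jX a ht.le)
    rw [hK, zero_rpow hβ.ne', zero_rpow hα0.ne', add_zero, mul_zero]
    simpa [← ha, zero_rpow hα0.ne', zero_rpow hβ.ne'] using hsplit 0

/-- If `T` is globally α-Hölderian from `X₀` to `Y₀` with constant `M₀` and maps
`X₁` into `Y₁` with `‖Ta‖_{Y₁} ≤ M₁ ‖a‖_{X₁}^β`, then
`K(Ta, t^β; Y₀, Y₁) ≤ max(M₀,M₁) (K(a,t)^β + K(a,t)^α)`. -/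
theorem Kfunc_estimate_holder_bounded
    {X₀ X₁ Y₀ Y₁ : Type*}
    [NormedAddCommGroup X₀] [NormedAddCommGroup X₁]
    [NormedAddCommGroup Y₀] [NormedAddCommGroup Y₁]
    (jX : X₁ →+ X₀) (jY : Y₁ →+ Y₀)
    (α β : ℝ) (hα0 : 0 < α) (hα1 : α ≤ 1) (hβ : 0 < β)
    (T₀ : X₀ → Y₀) (T₁ : X₁ → Y₁)
    (hcompat : ∀ a : X₁, jY (T₁ a) = T₀ (jX a))
    (M₀ M₁ : ℝ)
    (h0 : ∀ a b : X₀, ‖T₀ a - T₀ b‖ ≤ M₀ * ‖a - b‖ ^ α)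
    (h1 : ∀ a : X₁, ‖T₁ a‖ ≤ M₁ * ‖a‖ ^ β) :
    ∀ (a : X₀) (t : ℝ), 0 < t →
      Kfunc jY (T₀ a) (t ^ β) ≤
        max M₀ M₁ * ((Kfunc jX a t) ^ β + (Kfunc jX a t) ^ α) :=
  Kfunc_estimate_holder_bounded_general jX jY α β hα0 hβ T₀ T₁ hcompat M₀ M₁ h0 h1
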